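/- arXiv:1909.00147 — 5 statements merged into one kernel-verified Lean document; each statement's English description precedes it below -/
import Mathlib

section
/- For every tree T with maximum degree Δ(T) = r ≥ 2 and every positive integer s, the degree bipartite Ramsey number satisfies br_Δ(T;s) ≤ 2s(r-1); that is, there exists a bipartite graph H of maximum degree 2s(r-1) such that every s-edge-coloring of H contains a monochromatic copy of T. -/
open List

namespace BRT

variable (t L : ℕ)

abbrev Letter := Fin t × Bool

variable {t}

def linv (a : Letter t) : Letter t := (a.1, !a.2)

@[simp] lemma linv_linv (a : Letter t) : linv (linv a) = a := by
  cases a; simp [linv]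

lemma linv_ne (a : Letter t) : linv a ≠ a := by
  cases a with
  | mk i b => cases b <;> simp [linv]

def RedW (w : List (Letter t)) : Prop := w.Chain' (fun x y => y ≠ linv x)

lemma RedW.tail {w : List (Letter t)} (h : RedW w) : RedW w.tail := List.IsChain.tail h

lemma RedW.nil : RedW ([] : List (Letter t)) := List.isChain_nil

variable (t) in
def Ball : Type := {l : List (Letter t) // l.length ≤ L ∧ RedW l}

namespace Ball

instance : DecidableEq (Ball t L) := by unfold Ball; infer_instance

noncomputable instance : Fintype (Ball t L) := by
  classical
  apply Fintype.ofInjective (fun (l : Ball t L) => (fun k : Fin (L+1) => l.1[(k : ℕ)]?))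
  intro a b h
  apply Subtype.ext
  apply List.ext_getElem?
  intro n
  by_cases hn : n ≤ L
  · exact congrFun h ⟨n, by omega⟩
  · have ha1 := a.2.1
    have hb1 := b.2.1
    have ha : a.1[n]? = none := List.getElem?_eq_none (by omega)
    have hb : b.1[n]? = none := List.getElem?_eq_none (by omega)
    rw [ha, hb]

instance : Nonempty (Ball t L) := ⟨⟨[], by simp [RedW]; exact List.isChain_nil⟩⟩

end Ball

/-- formal multiplication of a letter onto a reduced word -/
def mword (a : Letter t) (l : List (Letter t)) : List (Letter t) :=
  if l.head? = some (linv a) then l.tail else a :: l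

lemma mword_red {a : Letter t} {l : List (Letter t)} (h : RedW l) : RedW (mword a l) := by
  unfold mword
  split
  · exact h.tail
  · rename_i hne
    refine List.isChain_cons.2 ⟨?_, h⟩
    intro y hy
    intro hcon
    apply hne
    cases l with
    | nil => simp at hy
    | cons c l' => simp_all

lemma mword_mword_inv (a : Letter t) {l : List (Letter t)} (h : RedW l) :
    mword (linv a) (mword a l) = l := by
  unfold mword
  split
  · rename_i hc
    cases l with
    | nil => simp at hc
    | cons c l' =>
      simp only [head?_cons, Option.some_inj] at hc
      subst hc
      simp only [tail_cons]
      have hh : l'.head? ≠ some (linv (linv a)) := by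
        cases l' with
        | nil => simp
        | cons d l'' =>
          have := (List.isChain_cons_cons.1 h).1
          simpa using this
      exact if_neg hh
  · simp

lemma mword_length_le {a : Letter t} {l : List (Letter t)} :
    (mword a l).length ≤ l.length + 1 := by
  unfold mword
  split
  · cases l <;> simp <;> omega
  · simp

lemma mword_cons {a : Letter t} {l : List (Letter t)} (h : l.head? ≠ some (linv a)) :
    mword a l = a :: l := if_neg h


section ExtendPerm

variable {α : Type*} [Fintype α]

open Classical in
/-- extend a map injective on `s` to a permutation agreeing with it on `s` -/
noncomputable def extendPerm (f : α → α) (s : Set α) (h : Set.InjOn f s) : Equiv.Perm α :=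
  letI := Classical.decEq α
  letI : DecidablePred (· ∈ s) := fun _ => Classical.propDecidable _
  letI : DecidablePred (· ∈ f '' s) := fun _ => Classical.propDecidable _
  (Equiv.Set.sumCompl s).symm.trans
    (((Equiv.Set.imageOfInjOn f s h).sumCongr
      (Fintype.equivOfCardEq (by
        have h1 : Fintype.card (f '' s) = Fintype.card s :=
          Fintype.card_congr (Equiv.Set.imageOfInjOn f s h).symm
        have h2 := Fintype.card_compl_set s
        have h3 := Fintype.card_compl_set (f '' s)
        omega))).trans
    (Equiv.Set.sumCompl (f '' s)))

lemma extendPerm_apply_mem (f : α → α) (s : Set α) (h : Set.InjOn f s) {x : α} (hx : x ∈ s) :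
    extendPerm f s h x = f x := by
  classical
  unfold extendPerm
  simp only [Equiv.trans_apply]
  rw [Equiv.Set.sumCompl_symm_apply_of_mem hx]
  simp [Equiv.Set.imageOfInjOn]

end ExtendPerm


section Sigma

variable {t : ℕ} (L : ℕ)

/-- total version of `mword` on the ball -/
noncomputable def mfun (a : Letter t) (l : Ball t L) : Ball t L :=
  if h : (mword a l.1).length ≤ L then ⟨mword a l.1, h, mword_red l.2.2⟩ else l

def mdom (a : Letter t) : Set (Ball t L) := {l | (mword a l.1).length ≤ L}

lemma mfun_injOn (a : Letter t) : Set.InjOn (mfun L a) (mdom L a) := by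
  intro x hx y hy hxy
  simp only [mdom, Set.mem_setOf_eq] at hx hy
  simp only [mfun, dif_pos hx, dif_pos hy] at hxy
  have h1 : mword a x.1 = mword a y.1 := by
    have e := (dif_pos hx).symm.trans (hxy.trans (dif_pos hy))
    exact congrArg Subtype.val e
  have h2 : x.1 = y.1 := by
    have := congrArg (mword (linv a)) h1
    rwa [mword_mword_inv a x.2.2, mword_mword_inv a y.2.2] at this
  exact Subtype.ext h2

noncomputable def sigmaP (i : Fin t) : Equiv.Perm (Ball t L) :=
  extendPerm (mfun L ((i, false) : Letter t)) (mdom L (i, false)) (mfun_injOn L _)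

lemma sigmaP_apply (i : Fin t) (l : Ball t L) (h : (mword ((i,false) : Letter t) l.1).length ≤ L) :
    sigmaP L i l = ⟨mword (i,false) l.1, h, mword_red l.2.2⟩ := by
  have hmem : l ∈ mdom L ((i,false) : Letter t) := h
  rw [sigmaP, extendPerm_apply_mem _ _ _ hmem, mfun]; exact dif_pos h

lemma sigmaP_inv_apply (i : Fin t) (l : Ball t L)
    (h : (mword ((i,true) : Letter t) l.1).length ≤ L) :
    (sigmaP L i)⁻¹ l = ⟨mword (i,true) l.1, h, mword_red l.2.2⟩ := by
  set l' : Ball t L := ⟨mword (i,true) l.1, h, mword_red l.2.2⟩ with hl'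
  have hinv : linv ((i,true) : Letter t) = (i, false) := by simp [linv]
  have key : mword ((i,false) : Letter t) l'.1 = l.1 := by
    rw [hl']
    have := mword_mword_inv ((i,true) : Letter t) l.2.2
    rwa [hinv] at this
  have hlen : (mword ((i,false) : Letter t) l'.1).length ≤ L := by rw [key]; exact l.2.1
  have : sigmaP L i l' = l := by
    rw [sigmaP_apply L i l' hlen]
    exact Subtype.ext key
  rw [← this]; exact (sigmaP L i).symm_apply_apply l'

noncomputable def gen (a : Letter t) : Equiv.Perm (Ball t L) :=
  if a.2 then (sigmaP L a.1)⁻¹ else sigmaP L a.1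

lemma gen_linv (a : Letter t) : gen L (linv a) = (gen L a)⁻¹ := by
  cases a with
  | mk i b => cases b <;> simp [gen, linv]

lemma gen_eval (a : Letter t) (l : Ball t L) (hhd : l.1.head? ≠ some (linv a))
    (hlen : l.1.length + 1 ≤ L) :
    gen L a l = ⟨a :: l.1, by simpa using hlen, by
      refine List.isChain_cons.2 ⟨?_, l.2.2⟩
      intro y hy hcon
      apply hhd
      rw [Option.mem_def] at hy
      rw [hy, hcon]⟩ := by
  have hm : mword a l.1 = a :: l.1 := mword_cons hhd
  have hlen' : (mword a l.1).length ≤ L := by rw [hm]; simpa using hlen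
  cases a with
  | mk i b =>
    cases b
    · rw [gen, if_neg (by simp), sigmaP_apply L i l hlen']
      exact Subtype.ext hm
    · rw [gen, if_pos rfl, sigmaP_inv_apply L i l hlen']
      exact Subtype.ext hm

noncomputable def emptyBall : Ball t L := ⟨[], by simp, RedW.nil⟩

lemma word_eval : ∀ (w : List (Letter t)), RedW w → w.length ≤ L →
    (((w.map (gen L)).prod) (emptyBall L)).1 = w := by
  intro w
  induction w with
  | nil => intro _ _; simp [emptyBall]; rfl
  | cons a w' ih =>
    intro hred hlen
    have hred' : RedW w' := hred.tail
    have hlen' : w'.length ≤ L := by simp at hlen; omega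
    have hpt := ih hred' hlen'
    set p := ((w'.map (gen L)).prod) (emptyBall L) with hp
    have hhd : p.1.head? ≠ some (linv a) := by
      rw [hpt]
      cases w' with
      | nil => simp
      | cons c w'' =>
        have hne := (List.isChain_cons_cons.1 hred).1
        simpa using fun hcon => hne hcon
    have hlen2 : p.1.length + 1 ≤ L := by
      rw [hpt]; simpa using hlen
    have := gen_eval L a p hhd hlen2
    rw [List.map_cons, List.prod_cons, Equiv.Perm.mul_apply, ← hp, this]
    simp [hpt]

lemma word_prod_ne_one {w : List (Letter t)} (hred : RedW w) (hne : w ≠ [])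
    (hlen : w.length ≤ L) : (w.map (gen L)).prod ≠ 1 := by
  intro hcon
  have h1 := word_eval L w hred hlen
  rw [hcon] at h1
  simp only [Equiv.Perm.one_apply] at h1
  exact hne (by rw [← h1]; rfl)

lemma gen_injective (hL : 1 ≤ L) : Function.Injective (gen L : Letter t → Equiv.Perm (Ball t L)) := by
  intro a b hab
  have ha := gen_eval L a (emptyBall L) (by simp [emptyBall]) (by simp [emptyBall]; omega)
  have hb := gen_eval L b (emptyBall L) (by simp [emptyBall]) (by simp [emptyBall]; omega)
  rw [hab] at ha
  rw [ha] at hb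
  have := congrArg Subtype.val hb
  simpa using this

end Sigma

section Graph

variable (t L : ℕ)

abbrev GVert := Equiv.Perm (Ball t L) × Bool

noncomputable def HGraph : SimpleGraph (GVert t L) where
  Adj p q := p.2 ≠ q.2 ∧ ∃ a : Letter t, q.1 = gen L a * p.1
  symm := by
    constructor
    rintro p q ⟨hb, a, ha⟩
    refine ⟨hb.symm, linv a, ?_⟩
    rw [gen_linv, ha]
    group
  loopless := by constructor; rintro p ⟨hb, _⟩; exact hb rfl

variable {t L}

noncomputable def stepLetter {p q : GVert t L} (h : (HGraph t L).Adj p q) : Letter t :=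
  Classical.choose h.2

lemma stepLetter_spec {p q : GVert t L} (h : (HGraph t L).Adj p q) :
    q.1 = gen L (stepLetter h) * p.1 :=
  Classical.choose_spec h.2

lemma backtrack_eq {p q z : GVert t L} (h1 : (HGraph t L).Adj p q) (h2 : (HGraph t L).Adj q z)
    (hl : stepLetter h2 = linv (stepLetter h1)) : z = p := by
  have e1 := stepLetter_spec h1
  have e2 := stepLetter_spec h2
  rw [hl, gen_linv, e1] at e2
  have hz1 : z.1 = p.1 := by rw [e2]; group
  have hz2 : z.2 = p.2 := by
    have b1 := h1.1
    have b2 := h2.1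
    revert b1 b2
    cases p.2 <;> cases q.2 <;> cases z.2 <;> simp
  exact Prod.ext hz1 hz2

noncomputable def wordOf : ∀ {p q : GVert t L}, (HGraph t L).Walk p q → List (Letter t)
  | _, _, .nil => []
  | _, _, .cons h w => stepLetter h :: wordOf w

@[simp] lemma wordOf_nil {p : GVert t L} : wordOf (SimpleGraph.Walk.nil : (HGraph t L).Walk p p) = [] := rfl

@[simp] lemma wordOf_cons {p q z : GVert t L} (h : (HGraph t L).Adj p q)
    (w : (HGraph t L).Walk q z) : wordOf (SimpleGraph.Walk.cons h w) = stepLetter h :: wordOf w := rfl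

lemma wordOf_length {p q : GVert t L} (w : (HGraph t L).Walk p q) :
    (wordOf w).length = w.length := by
  induction w with
  | nil => rfl
  | cons h w ih => simp [ih]

lemma walk_prod {p q : GVert t L} (w : (HGraph t L).Walk p q) :
    q.1 = ((wordOf w).reverse.map (gen L)).prod * p.1 := by
  induction w with
  | nil => simp
  | cons h w ih =>
    rename_i u v z
    rw [wordOf_cons, List.reverse_cons, List.map_append, List.prod_append]
    simp only [List.map_cons, List.map_nil, List.prod_cons, List.prod_nil, mul_one]
    rw [mul_assoc, ← stepLetter_spec h]
    exact ih

lemma chain_wordOf_of_path {p q : GVert t L} (w : (HGraph t L).Walk p q) (hw : w.IsPath) :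
    (wordOf w).Chain' (fun x y => y ≠ linv x) := by
  induction w with
  | nil => simp; exact List.isChain_nil
  | @cons u v q' hadj w ih =>
    rw [wordOf_cons]
    refine List.isChain_cons.2 ⟨?_, ih hw.of_cons⟩
    intro y hy hcon
    cases w with
    | nil => simp at hy
    | @cons v' z2 q'' h' r =>
      rw [wordOf_cons, List.head?_cons, Option.mem_def, Option.some_inj] at hy
      have hz2 : z2 = u := backtrack_eq hadj h' (hy.trans hcon)
      have hmem : z2 ∈ (SimpleGraph.Walk.cons h' r).support := by
        rw [SimpleGraph.Walk.support_cons]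
        exact List.mem_cons_of_mem _ (SimpleGraph.Walk.start_mem_support r)
      subst hz2
      rw [SimpleGraph.Walk.cons_isPath_iff] at hw
      exact hw.2 hmem

lemma loop_path_nil {z : GVert t L} (r : (HGraph t L).Walk z z) (hr : r.IsPath) :
    r = SimpleGraph.Walk.nil := by
  cases r with
  | nil => rfl
  | cons h rr =>
    exfalso
    have hend : z ∈ rr.support := SimpleGraph.Walk.end_mem_support rr
    have := hr.2
    rw [SimpleGraph.Walk.support_cons] at this
    exact (List.nodup_cons.1 this).1 hend

lemma HGraph_girth {v : GVert t L} (c : (HGraph t L).Walk v v) (hc : c.IsCycle) :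
    L < c.length := by
  by_contra hlen
  push_neg at hlen
  have h3 := hc.three_le_length
  cases c with
  | nil => simp at h3
  | cons h q =>
    rename_i w
    have hq : q.IsPath := ((SimpleGraph.Walk.cons_isCycle_iff q h).1 hc).1
    -- head condition
    have hchain : (wordOf (SimpleGraph.Walk.cons h q)).Chain' (fun x y => y ≠ linv x) := by
      rw [wordOf_cons]
      refine List.isChain_cons.2 ⟨?_, chain_wordOf_of_path q hq⟩
      intro y hy hcon
      cases q with
      | nil => simp at hy
      | cons h' r =>
        rename_i z2
        rw [wordOf_cons, List.head?_cons, Option.mem_def, Option.some_inj] at hy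
        have hz2 : z2 = v := backtrack_eq h h' (hy.trans hcon)
        subst hz2
        have : r = SimpleGraph.Walk.nil := loop_path_nil r hq.of_cons
        subst this
        simp [SimpleGraph.Walk.length_cons] at h3
    set w0 := wordOf (SimpleGraph.Walk.cons h q) with hw0
    have hredrev : RedW w0.reverse := by
      rw [RedW, List.Chain', List.isChain_reverse]
      refine hchain.imp ?_
      intro a b hab
      intro hcon
      exact hab (by rw [hcon, linv_linv])
    have hlenrev : w0.reverse.length ≤ L := by
      rw [List.length_reverse, hw0, wordOf_length]
      exact hlen
    have hnerev : w0.reverse ≠ [] := by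
      have hwl : w0.length = (SimpleGraph.Walk.cons h q).length := wordOf_length _
      intro hcon
      have := congrArg List.length hcon
      rw [List.length_reverse, hwl] at this
      simp at this
    have hprod := walk_prod (SimpleGraph.Walk.cons h q)
    rw [← hw0] at hprod
    have : (w0.reverse.map (gen L)).prod = 1 := by
      have := hprod
      exact (right_eq_mul.1 this)
    exact word_prod_ne_one L hredrev hnerev hlenrev this

noncomputable instance : Fintype (GVert t L) := by unfold GVert; infer_instance

instance : Nonempty (GVert t L) := ⟨(1, false)⟩

lemma HGraph_neighborFinset (hL : 1 ≤ L) [DecidableRel (HGraph t L).Adj] (p : GVert t L) :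
    (HGraph t L).neighborFinset p =
      Finset.univ.image (fun a : Letter t => ((gen L a) * p.1, !p.2)) := by
  ext q
  rw [SimpleGraph.mem_neighborFinset, Finset.mem_image]
  constructor
  · rintro ⟨hb, a, ha⟩
    refine ⟨a, Finset.mem_univ a, ?_⟩
    have hq2 : (!p.2) = q.2 := by
      cases hp : p.2 <;> cases hq : q.2 <;> simp_all
    exact Prod.ext ha.symm hq2
  · rintro ⟨a, -, ha⟩
    refine ⟨?_, a, ?_⟩
    · rw [← ha]; cases p.2 <;> simp
    · rw [← ha]

lemma HGraph_degree (hL : 1 ≤ L) [DecidableRel (HGraph t L).Adj] (p : GVert t L) :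
    (HGraph t L).degree p = 2 * t := by
  rw [← SimpleGraph.card_neighborFinset_eq_degree, HGraph_neighborFinset hL p]
  rw [Finset.card_image_of_injective _ ?hinj]
  · simp [Fintype.card_prod]; ring
  case hinj =>
    intro a b hab
    have h1 : gen L a * p.1 = gen L b * p.1 := congrArg Prod.fst hab
    exact gen_injective L hL (mul_right_cancel h1)

lemma HGraph_colorable : (HGraph t L).Colorable 2 := by
  refine ⟨SimpleGraph.Coloring.mk (fun p => if p.2 then 0 else 1) ?_⟩
  rintro p q ⟨hb, -⟩ hcon
  cases hp : p.2 <;> cases hq : q.2 <;> simp_all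

end Graph

section Extract

variable {V : Type*} [Fintype V] [DecidableEq V]

lemma extract_aux (Adj : V → V → Prop) [DecidableRel Adj] (hsymm : ∀ u v, Adj u v → Adj v u)
    (hirr : ∀ v, ¬ Adj v v) (k : ℕ) :
    ∀ (n : ℕ) (S : Finset V), S.card ≤ n →
      2*k*(S.card - 1) < ∑ v ∈ S, (S.filter (Adj v)).card →
      ∃ S', S' ⊆ S ∧ S'.Nonempty ∧ ∀ v ∈ S', k+1 ≤ (S'.filter (Adj v)).card := by
  intro n
  induction n with
  | zero =>
    intro S hcard hyp
    rw [Nat.le_zero, Finset.card_eq_zero] at hcard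
    subst hcard
    simp at hyp
  | succ n ih =>
    intro S hcard hyp
    -- S has at least 2 elements
    have hc0 : S.card ≠ 0 := by
      intro h0
      rw [Finset.card_eq_zero] at h0
      subst h0
      simp at hyp
    have hc1 : S.card ≠ 1 := by
      intro h1
      obtain ⟨v, hv⟩ := Finset.card_eq_one.1 h1
      subst hv
      rw [h1] at hyp
      simp only [Finset.sum_singleton, Finset.filter_singleton] at hyp
      rw [if_neg (hirr v)] at hyp
      simp at hyp
    by_cases hall : ∀ v ∈ S, k+1 ≤ (S.filter (Adj v)).card
    · exact ⟨S, Finset.Subset.refl S, Finset.card_pos.1 (by omega), hall⟩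
    · push_neg at hall
      obtain ⟨v₀, hv₀S, hv₀⟩ := hall
      have hdv₀ : (S.filter (Adj v₀)).card ≤ k := by omega
      set S' := S.erase v₀ with hS'
      have hcard' : S'.card = S.card - 1 := Finset.card_erase_of_mem hv₀S
      have hsplit : (S.filter (Adj v₀)).card + ∑ v ∈ S', (S.filter (Adj v)).card
          = ∑ v ∈ S, (S.filter (Adj v)).card := Finset.add_sum_erase S (fun v => (S.filter (Adj v)).card) hv₀S
      have hper : ∀ v ∈ S', (S.filter (Adj v)).card ≤ (S'.filter (Adj v)).card
          + (if Adj v v₀ then 1 else 0) := by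
        intro v hv
        have hins : S = insert v₀ S' := (Finset.insert_erase hv₀S).symm
        rw [hins, Finset.filter_insert]
        split
        · calc (insert v₀ (S'.filter (Adj v))).card ≤ (S'.filter (Adj v)).card + 1 :=
                Finset.card_insert_le _ _
            _ = (S'.filter (Adj v)).card + 1 := rfl
        · simp
      have hsum' : ∑ v ∈ S', (S.filter (Adj v)).card
          ≤ (∑ v ∈ S', (S'.filter (Adj v)).card) + (S'.filter (fun v => Adj v v₀)).card := by
        calc ∑ v ∈ S', (S.filter (Adj v)).card
            ≤ ∑ v ∈ S', ((S'.filter (Adj v)).card + (if Adj v v₀ then 1 else 0)) :=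
              Finset.sum_le_sum hper
          _ = (∑ v ∈ S', (S'.filter (Adj v)).card) + ∑ v ∈ S', (if Adj v v₀ then 1 else 0) :=
              Finset.sum_add_distrib
          _ = (∑ v ∈ S', (S'.filter (Adj v)).card) + (S'.filter (fun v => Adj v v₀)).card := by
              rw [Finset.card_filter]
      have hrev : (S'.filter (fun v => Adj v v₀)).card ≤ (S.filter (Adj v₀)).card := by
        apply Finset.card_le_card
        intro v hv
        rw [Finset.mem_filter] at hv ⊢
        exact ⟨Finset.mem_of_mem_erase hv.1, hsymm _ _ hv.2⟩
      -- new hypothesis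
      have hyp' : 2*k*(S'.card - 1) < ∑ v ∈ S', (S'.filter (Adj v)).card := by
        have hC2 : 2 ≤ S.card := by omega
        have e0 : S'.card - 1 = S.card - 2 := by omega
        have e1 : 2*k*(S.card - 1) = 2*k*(S.card - 2) + 2*k := by
          have h' : S.card - 1 = (S.card - 2) + 1 := by omega
          rw [h', Nat.mul_add, Nat.mul_one]
        have e2 : ∑ v ∈ S, (S.filter (Adj v)).card
            ≤ (∑ v ∈ S', (S'.filter (Adj v)).card) + 2*k := by
          calc ∑ v ∈ S, (S.filter (Adj v)).card
              = (S.filter (Adj v₀)).card + ∑ v ∈ S', (S.filter (Adj v)).card := hsplit.symm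
            _ ≤ k + ((∑ v ∈ S', (S'.filter (Adj v)).card) + k) := by
                have := le_trans hrev hdv₀
                omega
            _ = (∑ v ∈ S', (S'.filter (Adj v)).card) + 2*k := by ring
        have hfin := lt_of_lt_of_le hyp e2
        rw [e1] at hfin
        rw [e0]
        exact Nat.lt_of_add_lt_add_right hfin
      obtain ⟨S'', hsub, hne, hmin⟩ := ih S' (by omega) hyp'
      exact ⟨S'', hsub.trans (Finset.erase_subset _ _), hne, hmin⟩

end Extract

section Embed

open SimpleGraph Walk

variable {V : Type*} [Fintype V] [DecidableEq V]
variable {VT : Type*} [Fintype VT] [DecidableEq VT]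

lemma loop_path_nil' {G : SimpleGraph V} {z : V} (r : G.Walk z z) (hr : r.IsPath) :
    r = SimpleGraph.Walk.nil := by
  cases r with
  | nil => rfl
  | cons h rr =>
    exfalso
    have hend : z ∈ rr.support := SimpleGraph.Walk.end_mem_support rr
    have hnd := hr.2
    rw [SimpleGraph.Walk.support_cons] at hnd
    exact (List.nodup_cons.1 hnd).1 hend

lemma edge_end_of_mem {G : SimpleGraph V} :
    ∀ {a b : V} (p : G.Walk a b), p.IsPath → s(b,a) ∈ p.edges → p.length = 1 := by
  intro a b p
  induction p with
  | nil => intro _ h; simp at h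
  | @cons a w b h q ih =>
    intro hp he
    rw [SimpleGraph.Walk.edges_cons, List.mem_cons] at he
    rcases he with he | he
    · rw [Sym2.eq_iff] at he
      rcases he with ⟨hba, haw⟩ | ⟨hbw, -⟩
      · exfalso
        subst hba
        subst haw
        exact G.loopless.irrefl _ h
      · subst hbw
        have : q = SimpleGraph.Walk.nil := loop_path_nil' q hp.of_cons
        subst this
        rfl
    · exfalso
      have : a ∈ q.support := SimpleGraph.Walk.snd_mem_support_of_mem_edges q he
      rw [SimpleGraph.Walk.cons_isPath_iff] at hp
      exact hp.2 this

lemma exists_cross_edge {T : SimpleGraph VT} {A : Finset VT} :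
    ∀ {a b : VT} (p : T.Walk a b), a ∈ A → b ∉ A → ∃ u ∈ A, ∃ v, v ∉ A ∧ T.Adj u v := by
  intro a b p
  induction p with
  | nil => intro h1 h2; exact absurd h1 h2
  | @cons a w b h q ih =>
    intro h1 h2
    by_cases hw : w ∈ A
    · exact ih hw h2
    · exact ⟨a, h1, w, hw, h⟩

lemma map_walk {T : SimpleGraph VT} {G : SimpleGraph V} {A : Finset VT} {f : VT → V}
    (hpres : ∀ a ∈ A, ∀ b ∈ A, T.Adj a b → G.Adj (f a) (f b)) :
    ∀ {a b : VT} (p : T.Walk a b), (∀ x ∈ p.support, x ∈ A) →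
      ∃ q : G.Walk (f a) (f b), q.length = p.length ∧ q.support = p.support.map f := by
  intro a b p
  induction p with
  | nil => intro _; exact ⟨SimpleGraph.Walk.nil, rfl, by simp⟩
  | @cons a w b h p ih =>
    intro hsup
    have ha : a ∈ A := hsup a (SimpleGraph.Walk.start_mem_support _)
    have hw : w ∈ A := by
      apply hsup w
      rw [SimpleGraph.Walk.support_cons]
      exact List.mem_cons_of_mem _ (SimpleGraph.Walk.start_mem_support p)
    obtain ⟨q, hql, hqs⟩ := ih (fun x hx => hsup x (by
      rw [SimpleGraph.Walk.support_cons]; exact List.mem_cons_of_mem _ hx))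
    refine ⟨SimpleGraph.Walk.cons (hpres a ha w hw h) q, by simp [hql], ?_⟩
    rw [SimpleGraph.Walk.support_cons, SimpleGraph.Walk.support_cons, List.map_cons, hqs]

lemma embed (T : SimpleGraph VT) [DecidableRel T.Adj] (hT : T.IsTree) (r : ℕ) (hr1 : 1 ≤ r)
    (hdeg : ∀ v, T.degree v ≤ r)
    (H G : SimpleGraph V) [DecidableRel G.Adj]
    (hGH : ∀ u v, G.Adj u v → H.Adj u v)
    (hgirth : ∀ (v : V) (c : H.Walk v v), c.IsCycle → Fintype.card VT < c.length)
    (S' : Finset V) (hne : S'.Nonempty)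
    (hmin : ∀ v ∈ S', r ≤ (S'.filter (G.Adj v)).card) :
    ∃ f : VT → V, Function.Injective f ∧ ∀ u v, T.Adj u v → G.Adj (f u) (f v) := by
  classical
  have hTV : Nonempty VT := hT.isConnected.nonempty
  obtain ⟨root⟩ := hTV
  have key : ∀ (m : ℕ) (A : Finset VT) (f : VT → V),
      Fintype.card VT ≤ A.card + m → A.Nonempty →
      (∀ a ∈ A, ∀ b ∈ A, ∃ p : T.Walk a b, ∀ x ∈ p.support, x ∈ A) →
      (Set.InjOn f ↑A) →
      (∀ a ∈ A, ∀ b ∈ A, T.Adj a b → G.Adj (f a) (f b)) →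
      (∀ a ∈ A, f a ∈ S') →
      ∃ g : VT → V, Function.Injective g ∧ ∀ u v, T.Adj u v → G.Adj (g u) (g v) := by
    intro m
    induction m with
    | zero =>
      intro A f hcard hAne hlink hinj hpres himg
      have hA : A = Finset.univ := by
        apply Finset.eq_univ_of_card
        have := Finset.card_le_univ A
        omega
      subst hA
      refine ⟨f, ?_, ?_⟩
      · intro x y hxy
        exact hinj (by simp) (by simp) hxy
      · intro u v huv
        exact hpres u (Finset.mem_univ u) v (Finset.mem_univ v) huv
    | succ m ih =>
      intro A f hcard hAne hlink hinj hpres himg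
      by_cases hU : A = Finset.univ
      · subst hU
        refine ⟨f, ?_, ?_⟩
        · intro x y hxy
          exact hinj (by simp) (by simp) hxy
        · intro u v huv
          exact hpres u (Finset.mem_univ u) v (Finset.mem_univ v) huv
      · obtain ⟨b, hb⟩ : ∃ b, b ∉ A := by
          by_contra h
          push_neg at h
          exact hU (Finset.eq_univ_iff_forall.2 h)
        obtain ⟨a0, ha0⟩ := hAne
        obtain ⟨pw⟩ := hT.isConnected.preconnected a0 b
        obtain ⟨u, huA, v, hvA, huv⟩ := exists_cross_edge pw ha0 hb
        -- v has u as unique neighbor in A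
        have huniq : ∀ x ∈ A, T.Adj v x → x = u := by
          intro x hxA hvx
          by_contra hxu
          obtain ⟨p0, hp0⟩ := hlink x hxA u huA
          set p := p0.bypass with hpdef
          have hpPath : p.IsPath := p0.bypass_isPath
          have hpsup : ∀ y ∈ p.support, y ∈ A := fun y hy =>
            hp0 y (p0.support_bypass_subset hy)
          have hvp : v ∉ p.support := fun hc => hvA (hpsup v hc)
          set p' : T.Walk v u := SimpleGraph.Walk.cons hvx p with hp'def
          have hp'Path : p'.IsPath := by
            rw [hp'def, SimpleGraph.Walk.cons_isPath_iff]
            exact ⟨hpPath, hvp⟩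
          have hedge : s(u, v) ∉ p'.edges := by
            rw [hp'def, SimpleGraph.Walk.edges_cons, List.mem_cons]
            rintro (he | he)
            · rw [Sym2.eq_iff] at he
              rcases he with ⟨huv', hvx'⟩ | ⟨hux, -⟩
              · exact hvA (huv' ▸ huA)
              · exact hxu hux.symm
            · exact hvp (SimpleGraph.Walk.snd_mem_support_of_mem_edges p he)
          have hcyc : (SimpleGraph.Walk.cons huv p').IsCycle :=
            (SimpleGraph.Walk.cons_isCycle_iff p' huv).2 ⟨hp'Path, hedge⟩
          exact hT.IsAcyclic _ hcyc
        -- candidate set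
        have hfuS : f u ∈ S' := himg u huA
        set C := S'.filter (G.Adj (f u)) with hC
        have hCcard : r ≤ C.card := hmin (f u) hfuS
        set Bad := A.filter (fun x => f x ∈ C) with hBad
        have hBadsub : Bad ⊆ A.filter (fun x => T.Adj u x) := by
          intro x hx
          rw [hBad, Finset.mem_filter] at hx
          obtain ⟨hxA, hfxC⟩ := hx
          rw [Finset.mem_filter]
          refine ⟨hxA, ?_⟩
          have hGadj : G.Adj (f u) (f x) := (Finset.mem_filter.1 hfxC).2
          by_contra hnadj
          have hxu : x ≠ u := by
            rintro rfl
            exact G.loopless.irrefl _ hGadj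
          obtain ⟨p0, hp0⟩ := hlink x hxA u huA
          set p := p0.bypass with hpdef
          have hpPath : p.IsPath := p0.bypass_isPath
          have hpsup : ∀ y ∈ p.support, y ∈ A := fun y hy =>
            hp0 y (p0.support_bypass_subset hy)
          have hplt : p.length < Fintype.card VT := hpPath.length_lt
          have hplen2 : 2 ≤ p.length := by
            rcases hl : p.length with _ | n
            · exact absurd (SimpleGraph.Walk.eq_of_length_eq_zero hl) hxu
            · rcases n with _ | n
              · exact absurd (SimpleGraph.Walk.adj_of_length_eq_one hl) (fun hc => hnadj hc.symm)
              · omega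
          have hpresH : ∀ a ∈ A, ∀ b ∈ A, T.Adj a b → H.Adj (f a) (f b) :=
            fun a ha b hb hab => hGH _ _ (hpres a ha b hb hab)
          obtain ⟨q, hql, hqs⟩ := map_walk hpresH p hpsup
          have hqPath : q.IsPath := by
            rw [SimpleGraph.Walk.isPath_def, hqs]
            refine List.Nodup.map_on ?_ hpPath.support_nodup
            intro y hy z hz hyz
            exact hinj (hpsup y hy) (hpsup z hz) hyz
          have hHadj : H.Adj (f u) (f x) := hGH _ _ hGadj
          have hedge : s(f u, f x) ∉ q.edges := by
            intro hc
            have := edge_end_of_mem q hqPath hc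
            omega
          have hcyc : (SimpleGraph.Walk.cons hHadj q).IsCycle :=
            (SimpleGraph.Walk.cons_isCycle_iff q hHadj).2 ⟨hqPath, hedge⟩
          have := hgirth _ _ hcyc
          rw [SimpleGraph.Walk.length_cons] at this
          omega
        have hBadcard : Bad.card ≤ r - 1 := by
          have h1 : Bad.card ≤ (A.filter (fun x => T.Adj u x)).card :=
            Finset.card_le_card hBadsub
          have h2 : (A.filter (fun x => T.Adj u x)) ⊆ (T.neighborFinset u).erase v := by
            intro x hx
            rw [Finset.mem_filter] at hx
            rw [Finset.mem_erase, SimpleGraph.mem_neighborFinset]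
            refine ⟨fun hc => hvA ?_, hx.2⟩
            rw [← hc]
            exact hx.1
          have h3 := Finset.card_le_card h2
          rw [Finset.card_erase_of_mem (by rw [SimpleGraph.mem_neighborFinset]; exact huv),
            SimpleGraph.card_neighborFinset_eq_degree] at h3
          have h4 := hdeg u
          omega
        obtain ⟨w, hwC, hwim⟩ : ∃ w ∈ C, w ∉ A.image f := by
          by_contra h
          push_neg at h
          have hsub : C ⊆ Bad.image f := by
            intro w hwC
            obtain ⟨x, hxA, hfx⟩ := Finset.mem_image.1 (h w hwC)
            exact Finset.mem_image.2 ⟨x, Finset.mem_filter.2 ⟨hxA, by rw [hfx]; exact hwC⟩, hfx⟩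
          have h1 := Finset.card_le_card hsub
          have h2 := Finset.card_image_le (s := Bad) (f := f)
          omega
        set g := Function.update f v w with hg
        have hgA : ∀ a ∈ A, g a = f a := by
          intro a haA
          rw [hg, Function.update_of_ne (show a ≠ v from fun hc => hvA (by rw [← hc]; exact haA)) _ _]
        have hgv : g v = w := by rw [hg, Function.update_self]
        apply ih (insert v A) g
        · rw [Finset.card_insert_of_notMem hvA]
          omega
        · exact ⟨v, Finset.mem_insert_self v A⟩
        · -- linked
          intro a ha b hbmem
          rw [Finset.mem_insert] at ha hbmem
          have mkwalk : ∀ c ∈ A, ∃ p : T.Walk c v, ∀ x ∈ p.support, x ∈ insert v A := by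
            intro c hcA
            obtain ⟨p1, hp1⟩ := hlink c hcA u huA
            refine ⟨p1.append (SimpleGraph.Walk.cons huv SimpleGraph.Walk.nil), ?_⟩
            intro x hx
            rw [SimpleGraph.Walk.support_append] at hx
            rcases List.mem_append.1 hx with hx | hx
            · exact Finset.mem_insert_of_mem (hp1 x hx)
            · simp only [SimpleGraph.Walk.support_cons, SimpleGraph.Walk.support_nil,
                List.tail_cons] at hx
              rw [List.mem_singleton] at hx
              subst hx
              exact Finset.mem_insert_self _ _
          rcases ha with rfl | haA
          · rcases hbmem with rfl | hbA
            · exact ⟨SimpleGraph.Walk.nil, by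
                intro x hx
                rw [SimpleGraph.Walk.support_nil, List.mem_singleton] at hx
                subst hx
                exact Finset.mem_insert_self _ _⟩
            · obtain ⟨p1, hp1⟩ := mkwalk b hbA
              exact ⟨p1.reverse, fun x hx => hp1 x (by
                rwa [SimpleGraph.Walk.support_reverse, List.mem_reverse] at hx)⟩
          · rcases hbmem with rfl | hbA
            · exact mkwalk a haA
            · obtain ⟨p1, hp1⟩ := hlink a haA b hbA
              exact ⟨p1, fun x hx => Finset.mem_insert_of_mem (hp1 x hx)⟩
        · -- InjOn
          intro x hx y hy hxy
          rw [Finset.coe_insert, Set.mem_insert_iff] at hx hy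
          rcases hx with rfl | hxA
          · rcases hy with rfl | hyA
            · rfl
            · exfalso
              rw [hgv, hgA y hyA] at hxy
              exact hwim (Finset.mem_image.2 ⟨y, hyA, hxy.symm⟩)
          · rcases hy with rfl | hyA
            · exfalso
              rw [hgv, hgA x hxA] at hxy
              exact hwim (Finset.mem_image.2 ⟨x, hxA, hxy⟩)
            · rw [hgA x hxA, hgA y hyA] at hxy
              exact hinj hxA hyA hxy
        · -- preserves
          intro x hx y hy hxy
          rw [Finset.mem_insert] at hx hy
          rcases hx with rfl | hxA
          · rcases hy with rfl | hyA
            · exact absurd hxy (T.loopless.irrefl _)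
            · have hyu : y = u := huniq y hyA hxy
              subst hyu
              rw [hgv, hgA y hyA]
              have : G.Adj (f y) w := (Finset.mem_filter.1 hwC).2
              exact this.symm
          · rcases hy with rfl | hyA
            · have hxu : x = u := huniq x hxA hxy.symm
              subst hxu
              rw [hgv, hgA x hxA]
              exact (Finset.mem_filter.1 hwC).2
            · rw [hgA x hxA, hgA y hyA]
              exact hpres x hxA y hyA hxy
        · -- image in S'
          intro x hx
          rw [Finset.mem_insert] at hx
          rcases hx with rfl | hxA
          · rw [hgv]
            exact (Finset.mem_filter.1 hwC).1
          · rw [hgA x hxA]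
            exact himg x hxA
  obtain ⟨w0, hw0⟩ := hne
  apply key (Fintype.card VT) {root} (fun _ => w0)
  · simp
  · exact ⟨root, Finset.mem_singleton_self root⟩
  · intro a ha b hbm
    rw [Finset.mem_singleton] at ha hbm
    subst ha; subst hbm
    exact ⟨SimpleGraph.Walk.nil, by
      intro x hx
      rw [SimpleGraph.Walk.support_nil, List.mem_singleton] at hx
      subst hx
      exact Finset.mem_singleton_self _⟩
  · intro x hx y hy hxy
    rw [Finset.coe_singleton, Set.mem_singleton_iff] at hx hy
    rw [hx, hy]
  · intro a ha b hbm hab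
    rw [Finset.mem_singleton] at ha hbm
    subst ha; subst hbm
    exact absurd hab (T.loopless.irrefl _)
  · intro a ha
    exact hw0

end Embed

end BRT

/-- For every tree `T` with maximum degree `r ≥ 2` and every `s ≥ 1`, there exists a
bipartite graph `H` of maximum degree `2s(r-1)` such that every `s`-edge-coloring of
`H` contains a monochromatic copy of `T`; hence `br_Δ(T;s) ≤ 2s(r-1)`. -/
theorem br_degree_ramsey_tree_upper {VT : Type*} [Fintype VT] [DecidableEq VT]
    (T : SimpleGraph VT) [DecidableRel T.Adj] (r s : ℕ)
    (hT : T.IsTree) (hr : T.maxDegree = r) (hr2 : 2 ≤ r) (hs : 1 ≤ s) :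
    ∃ (VH : Type) (_ : Fintype VH) (H : SimpleGraph VH) (_ : DecidableRel H.Adj),
      H.Colorable 2 ∧ H.maxDegree = 2 * s * (r - 1) ∧
      ∀ c : Sym2 VH → Fin s,
        ∃ (i : Fin s) (f : VT → VH), Function.Injective f ∧
          ∀ u v, T.Adj u v → H.Adj (f u) (f v) ∧ c s(f u, f v) = i := by
  classical
  have hTV : Nonempty VT := hT.isConnected.nonempty
  set n := Fintype.card VT with hn
  have hn1 : 1 ≤ n := Fintype.card_pos
  set t := s * (r - 1) with ht
  have ht1 : 1 ≤ t := by
    have : 1 ≤ r - 1 := by omega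
    calc 1 = 1 * 1 := by ring
      _ ≤ s * (r - 1) := Nat.mul_le_mul hs this
  set L := n with hL
  have hL1 : 1 ≤ L := hn1
  letI dec : DecidableRel (BRT.HGraph t L).Adj := Classical.decRel _
  refine ⟨BRT.GVert t L, inferInstance, BRT.HGraph t L, dec, BRT.HGraph_colorable, ?_, ?_⟩
  · -- max degree
    apply Nat.le_antisymm
    · apply SimpleGraph.maxDegree_le_of_forall_degree_le
      intro v
      exact le_of_eq ((BRT.HGraph_degree hL1 v).trans (by rw [ht]; ring))
    · obtain ⟨p⟩ : Nonempty (BRT.GVert t L) := inferInstance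
      have h1 := SimpleGraph.degree_le_maxDegree (G := BRT.HGraph t L) p
      rw [BRT.HGraph_degree hL1 p] at h1
      calc 2 * s * (r - 1) = 2 * t := by rw [ht]; ring
        _ ≤ _ := h1
  · -- coloring
    intro c
    let V := BRT.GVert t L
    let H := BRT.HGraph t L
    set Gc : Fin s → SimpleGraph V := fun i =>
      { Adj := fun u v => H.Adj u v ∧ c s(u, v) = i
        symm := by
          constructor
          rintro u v ⟨h1, h2⟩
          refine ⟨h1.symm, ?_⟩
          rwa [Sym2.eq_swap]
        loopless := ⟨fun v hc => H.loopless.irrefl v hc.1⟩ } with hGc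
    letI decG : ∀ i, DecidableRel (Gc i).Adj := fun i => Classical.decRel _
    set N := Fintype.card V with hN
    have hN1 : 1 ≤ N := Fintype.card_pos
    -- fiberwise degree sum
    have hfiber : ∀ v : V, ∑ i : Fin s, (Finset.univ.filter ((Gc i).Adj v)).card
        = (Finset.univ.filter (H.Adj v)).card := by
      intro v
      have hsplit : ∀ i : Fin s, Finset.univ.filter ((Gc i).Adj v)
          = (Finset.univ.filter (H.Adj v)).filter (fun u => c s(v, u) = i) := by
        intro i
        ext u
        rw [Finset.mem_filter, Finset.mem_filter, Finset.mem_filter]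
        constructor
        · intro h
          exact ⟨⟨h.1, h.2.1⟩, h.2.2⟩
        · intro h
          exact ⟨h.1.1, h.1.2, h.2⟩
      rw [Finset.sum_congr rfl (fun i _ => congrArg Finset.card (hsplit i))]
      exact (Finset.card_eq_sum_card_fiberwise (f := fun u => c s(v, u)) (t := Finset.univ)
        (fun x _ => Finset.mem_univ _)).symm
    have hHdeg : ∀ v : V, (Finset.univ.filter (H.Adj v)).card = 2 * t := by
      intro v
      rw [← SimpleGraph.neighborFinset_eq_filter, SimpleGraph.card_neighborFinset_eq_degree]
      exact BRT.HGraph_degree hL1 v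
    -- pigeonhole
    have hsum : ∑ i : Fin s, (2 * (r - 1) * N) ≤
        ∑ i : Fin s, ∑ v : V, (Finset.univ.filter ((Gc i).Adj v)).card := by
      rw [Finset.sum_comm]
      have h1 : ∑ v : V, ∑ i : Fin s, (Finset.univ.filter ((Gc i).Adj v)).card = N * (2 * t) := by
        rw [Finset.sum_congr rfl (fun v _ => (hfiber v).trans (hHdeg v))]
        rw [Finset.sum_const, Finset.card_univ, smul_eq_mul]
      rw [h1, Finset.sum_const, Finset.card_univ, Fintype.card_fin, smul_eq_mul, ht]
      apply le_of_eq
      ring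
    haveI : Nonempty (Fin s) := ⟨⟨0, hs⟩⟩
    obtain ⟨i, -, hXi⟩ := Finset.exists_le_of_sum_le
      (Finset.univ_nonempty (α := Fin s)) hsum
    -- extraction
    have hhyp : 2 * (r - 1) * (N - 1) < ∑ v : V, (Finset.univ.filter ((Gc i).Adj v)).card := by
      have h2 : 2 * (r - 1) * (N - 1) < 2 * (r - 1) * N := by
        apply Nat.mul_lt_mul_of_pos_left
        · omega
        · omega
      exact lt_of_lt_of_le h2 hXi
    obtain ⟨S', hS'sub, hS'ne, hS'min⟩ := BRT.extract_aux ((Gc i).Adj)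
      (fun u v h => h.symm) (fun v => (Gc i).loopless.irrefl v) (r - 1)
      (Finset.univ.card) Finset.univ (le_refl _) (by
        rw [Finset.card_univ]
        exact hhyp)
    have hS'min' : ∀ v ∈ S', r ≤ (S'.filter ((Gc i).Adj v)).card := by
      intro v hv
      have := hS'min v hv
      omega
    -- embed
    have hdegT : ∀ v, T.degree v ≤ r := by
      intro v
      rw [← hr]
      exact SimpleGraph.degree_le_maxDegree (G := T) v
    have hgirth : ∀ (v : V) (cy : H.Walk v v), cy.IsCycle → Fintype.card VT < cy.length := by
      intro v cy hcy
      have := BRT.HGraph_girth cy hcy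
      omega
    obtain ⟨f, hfinj, hfpres⟩ := BRT.embed T hT r (by omega) hdegT H (Gc i)
      (fun u v h => h.1) hgirth S' hS'ne hS'min'
    exact ⟨i, f, hfinj, fun u v huv => ⟨(hfpres u v huv).1, (hfpres u v huv).2⟩⟩
end

section
/- Let G be a subgraph of the complete bipartite graph K_{M,N} with parts A (|A| = M) and B (|B| = N). If e(G) ≥ Np for some real p ≥ m, and N·C(p,m) > (n-1)·C(M,m), then G contains a copy of K_{m,n} with the side of size m in A. -/
open Finset Polynomial

noncomputable def kstPhi (m : ℕ) (x : ℝ) : ℝ := ∏ i ∈ Finset.range m, max (x - i) 0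

lemma kstPhi_nonneg (m : ℕ) (x : ℝ) : 0 ≤ kstPhi m x :=
  Finset.prod_nonneg fun _ _ => le_max_right _ _

lemma kstPhi_mono (m : ℕ) : Monotone (kstPhi m) := fun x y hxy =>
  Finset.prod_le_prod (fun _ _ => le_max_right _ _)
    (fun i _ => max_le_max (by linarith) le_rfl)

lemma kstPhi_convex (m : ℕ) : ConvexOn ℝ Set.univ (kstPhi m) := by
  induction m with
  | zero =>
      have h0 : kstPhi 0 = fun _ => (1:ℝ) := by funext x; simp [kstPhi]
      rw [h0]; exact convexOn_const _ convex_univ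
  | succ m ih =>
      have hfac : ConvexOn ℝ Set.univ (fun x : ℝ => max (x - m) 0) := by
        have : ConvexOn ℝ Set.univ (fun x : ℝ => x - m) :=
          (convexOn_id convex_univ).sub (concaveOn_const _ convex_univ)
        simpa [Pi.sup_def] using this.sup (convexOn_const (0:ℝ) convex_univ)
      have hmonofac : Monotone (fun x : ℝ => max (x - m) 0) := fun x y hxy =>
        max_le_max (by linarith) le_rfl
      have := ih.mul hfac (fun x _ => kstPhi_nonneg m x)
        (fun x _ => le_max_right _ _)
        (((kstPhi_mono m).monovary hmonofac).monovaryOn _)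
      have heq : (kstPhi m * fun x : ℝ => max (x - m) 0) = kstPhi (m+1) := by
        funext x
        simp [kstPhi, Finset.prod_range_succ]
      rwa [heq] at this

lemma descPochhammer_eval_prod (m : ℕ) (x : ℝ) :
    (descPochhammer ℝ m).eval x = ∏ i ∈ Finset.range m, (x - i) := by
  induction m with
  | zero => simp
  | succ m ih => rw [descPochhammer_succ_eval, ih, Finset.prod_range_succ]

lemma kstPhi_eq_of_le (m : ℕ) (x : ℝ) (hx : (m : ℝ) ≤ x) :
    kstPhi m x = (descPochhammer ℝ m).eval x := by
  rw [descPochhammer_eval_prod, kstPhi]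
  refine Finset.prod_congr rfl fun i hi => ?_
  rw [Finset.mem_range] at hi
  have : (i : ℝ) < m := by exact_mod_cast hi
  exact max_eq_left (by linarith)

lemma kstPhi_nat (m d : ℕ) : kstPhi m (d : ℝ) = (d.descFactorial m : ℝ) := by
  rcases le_or_gt m d with h | h
  · rw [kstPhi_eq_of_le m d (by exact_mod_cast h),
      descPochhammer_eval_eq_descFactorial]
  · rw [Nat.descFactorial_eq_zero_iff_lt.mpr h, Nat.cast_zero, kstPhi]
    refine Finset.prod_eq_zero (Finset.mem_range.mpr h) ?_
    simp

/-- Kővári–Sós–Turán counting lemma: a subgraph `G` of `K_{M,N}` (given by the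
relation `R` between the part `A` of size `M` and the part `B` of size `N`) with
`e(G) ≥ Np`, where `p ≥ m` is real and `N·C(p,m) > (n-1)·C(M,m)`, contains a copy of
`K_{m,n}` with the side of size `m` in `A`. -/
theorem kovari_sos_turan (M N m n : ℕ) (hm : 1 ≤ m) (hn : 1 ≤ n)
    (R : Fin M → Fin N → Prop) [∀ a b, Decidable (R a b)] (p : ℝ) (hpm : (m : ℝ) ≤ p)
    (hedges : (N : ℝ) * p ≤ (Finset.univ.filter fun q : Fin M × Fin N => R q.1 q.2).card)
    (hcount : ((n : ℝ) - 1) * (M.choose m) <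
      (N : ℝ) * ((descPochhammer ℝ m).eval p / m.factorial)) :
    ∃ (S : Finset (Fin M)) (T : Finset (Fin N)),
      S.card = m ∧ T.card = n ∧ ∀ a ∈ S, ∀ b ∈ T, R a b := by
  classical
  -- N > 0
  have hN : 0 < N := by
    rcases Nat.eq_zero_or_pos N with h | h
    · exfalso
      rw [h] at hcount
      have h1 : (0:ℝ) ≤ ((n : ℝ) - 1) * (M.choose m) := by
        have h3 : (1:ℝ) ≤ n := by exact_mod_cast hn
        have h4 : (0:ℝ) ≤ (M.choose m : ℝ) := Nat.cast_nonneg _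
        nlinarith
      simp at hcount; linarith
    · exact h
  set d : Fin N → ℕ := fun b => (Finset.univ.filter fun a => R a b).card with hd
  -- edge count as a sum of degrees
  have hsum : (Finset.univ.filter fun q : Fin M × Fin N => R q.1 q.2).card
      = ∑ b : Fin N, d b := by
    rw [Finset.card_eq_sum_card_fiberwise
      (f := Prod.snd) (t := Finset.univ) (fun x _ => Finset.mem_univ x.2)]
    refine Finset.sum_congr rfl fun b _ => ?_
    refine Finset.card_nbij' Prod.fst (fun a => (a, b)) ?_ ?_ ?_ ?_
    · intro x hx
      simp only [Finset.mem_coe, Finset.mem_filter, Finset.mem_univ, true_and] at hx ⊢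
      rcases hx with ⟨h1, h2⟩
      rw [← h2]; exact h1
    · intro a ha
      simp only [Finset.mem_coe, Finset.mem_filter, Finset.mem_univ, true_and] at ha ⊢
      exact ⟨ha, trivial⟩
    · intro x hx
      simp only [Finset.mem_coe, Finset.mem_filter, Finset.mem_univ, true_and] at hx
      rw [← hx.2]
    · intro a _; rfl
  -- Jensen
  have hfact : (0:ℝ) < m.factorial := by exact_mod_cast m.factorial_pos
  have hNR : (0:ℝ) < N := by exact_mod_cast hN
  have jensen : (N : ℝ) * (descPochhammer ℝ m).eval p ≤ ∑ b : Fin N, kstPhi m (d b) := by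
    have hw : ∑ _b : Fin N, (N:ℝ)⁻¹ = 1 := by
      rw [Finset.sum_const, Finset.card_univ, Fintype.card_fin, nsmul_eq_mul,
        mul_inv_cancel₀ hNR.ne']
    have hJ := (kstPhi_convex m).map_sum_le (t := (Finset.univ : Finset (Fin N)))
      (w := fun _ => (N:ℝ)⁻¹) (p := fun b => (d b : ℝ))
      (fun _ _ => by positivity) hw (fun _ _ => Set.mem_univ _)
    have hsumd : (N : ℝ) * p ≤ ∑ b : Fin N, (d b : ℝ) := by
      rw [hsum] at hedges
      calc (N : ℝ) * p ≤ ((∑ b : Fin N, d b : ℕ) : ℝ) := hedges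
        _ = ∑ b : Fin N, (d b : ℝ) := by push_cast; rfl
    have havg : p ≤ ∑ b : Fin N, (N:ℝ)⁻¹ • (d b : ℝ) := by
      simp only [smul_eq_mul]
      rw [← Finset.mul_sum]
      calc p = (N:ℝ)⁻¹ * ((N:ℝ) * p) := by field_simp
        _ ≤ (N:ℝ)⁻¹ * ∑ b : Fin N, (d b : ℝ) :=
            mul_le_mul_of_nonneg_left hsumd (by positivity)
    have hmono := kstPhi_mono m havg
    simp only [smul_eq_mul] at hJ
    have : kstPhi m p ≤ ∑ b : Fin N, (N:ℝ)⁻¹ * kstPhi m (d b) := le_trans hmono hJ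
    rw [kstPhi_eq_of_le m p hpm] at this
    calc (N : ℝ) * (descPochhammer ℝ m).eval p
        ≤ (N : ℝ) * ∑ b : Fin N, (N:ℝ)⁻¹ * kstPhi m (d b) :=
          mul_le_mul_of_nonneg_left this (by positivity)
      _ = ∑ b : Fin N, kstPhi m (d b) := by
          rw [Finset.mul_sum]
          refine Finset.sum_congr rfl fun b _ => ?_
          rw [← mul_assoc, mul_inv_cancel₀ hNR.ne', one_mul]
  -- double counting
  set P := Finset.powersetCard m (Finset.univ : Finset (Fin M)) with hP
  set cnt : Finset (Fin M) → ℕ :=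
    fun S => (Finset.univ.filter fun b => ∀ a ∈ S, R a b).card with hcnt
  have hdc : ∑ b : Fin N, (d b).choose m = ∑ S ∈ P, cnt S := by
    have step : ∀ b : Fin N, (d b).choose m
        = (P.filter fun S => S ⊆ Finset.univ.filter fun a => R a b).card := by
      intro b
      rw [← Finset.card_powersetCard]
      congr 1
      ext S
      simp only [Finset.mem_powersetCard, Finset.mem_filter, hP, Finset.mem_powersetCard]
      constructor
      · exact fun ⟨h1, h2⟩ => ⟨⟨Finset.subset_univ S, h2⟩, h1⟩
      · exact fun ⟨⟨_, h2⟩, h1⟩ => ⟨h1, h2⟩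
    calc ∑ b : Fin N, (d b).choose m
        = ∑ b : Fin N, ∑ S ∈ P, if S ⊆ Finset.univ.filter (fun a => R a b) then 1 else 0 := by
          refine Finset.sum_congr rfl fun b _ => ?_
          rw [step b, Finset.card_filter]
      _ = ∑ S ∈ P, ∑ b : Fin N, if S ⊆ Finset.univ.filter (fun a => R a b) then 1 else 0 :=
          Finset.sum_comm
      _ = ∑ S ∈ P, cnt S := by
          refine Finset.sum_congr rfl fun S _ => ?_
          simp only [hcnt]
          rw [Finset.card_filter]
          refine Finset.sum_congr rfl fun b _ => ?_
          congr 1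
          simp only [eq_iff_iff, Finset.subset_iff, Finset.mem_filter, Finset.mem_univ,
            true_and]
      
  -- lower bound the double count
  have hlow : ((n : ℝ) - 1) * P.card < ∑ S ∈ P, (cnt S : ℝ) := by
    have key : (N : ℝ) * (descPochhammer ℝ m).eval p
        ≤ (∑ b : Fin N, ((d b).choose m : ℝ)) * m.factorial := by
      calc (N : ℝ) * (descPochhammer ℝ m).eval p ≤ ∑ b : Fin N, kstPhi m (d b) := jensen
        _ = ∑ b : Fin N, ((d b).descFactorial m : ℝ) := by
            exact Finset.sum_congr rfl fun b _ => kstPhi_nat m (d b)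
        _ = (∑ b : Fin N, ((d b).choose m : ℝ)) * m.factorial := by
            rw [Finset.sum_mul]
            refine Finset.sum_congr rfl fun b _ => ?_
            rw [Nat.descFactorial_eq_factorial_mul_choose]
            push_cast; ring
    have h1 : (N : ℝ) * ((descPochhammer ℝ m).eval p / m.factorial)
        ≤ ∑ b : Fin N, ((d b).choose m : ℝ) := by
      calc (N : ℝ) * ((descPochhammer ℝ m).eval p / m.factorial)
          = ((N : ℝ) * (descPochhammer ℝ m).eval p) / m.factorial := by ring
        _ ≤ ((∑ b : Fin N, ((d b).choose m : ℝ)) * m.factorial) / m.factorial := by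
            gcongr
        _ = ∑ b : Fin N, ((d b).choose m : ℝ) := by field_simp
    have h2 : (∑ S ∈ P, (cnt S : ℝ)) = ∑ b : Fin N, ((d b).choose m : ℝ) := by
      rw [← Nat.cast_sum, ← Nat.cast_sum, hdc]
    rw [h2, hP, Finset.card_powersetCard, Finset.card_univ, Fintype.card_fin]
    exact lt_of_lt_of_le hcount h1
  -- pigeonhole: some S has cnt S ≥ n
  have hex : ∃ S ∈ P, n ≤ cnt S := by
    by_contra hcon
    push_neg at hcon
    have hb : ∑ S ∈ P, (cnt S : ℝ) ≤ ((n : ℝ) - 1) * P.card := by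
      calc ∑ S ∈ P, (cnt S : ℝ) ≤ ∑ _S ∈ P, ((n : ℝ) - 1) := by
            refine Finset.sum_le_sum fun S hS => ?_
            have h5 : cnt S + 1 ≤ n := hcon S hS
            have h6 : ((cnt S : ℝ) + 1) ≤ n := by exact_mod_cast h5
            linarith
        _ = ((n : ℝ) - 1) * P.card := by
            rw [Finset.sum_const, nsmul_eq_mul, mul_comm]
    linarith
  obtain ⟨S, hSP, hScnt⟩ := hex
  obtain ⟨T, hT, hTcard⟩ := Finset.exists_subset_card_eq hScnt
  refine ⟨S, T, ?_, hTcard, ?_⟩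
  · exact (Finset.mem_powersetCard.mp hSP).2
  · intro a ha b hb
    have := hT hb
    simp only [hcnt, Finset.mem_filter] at this
    exact this.2 a ha
end

section
/- Let m, n, s be positive integers with m ≥ 2, M ≥ sm, and set N = ⌊C(M,m)·n / C(M/s,m)⌋ where s divides M. Then every s-edge-coloring of K_{M,N} contains a monochromatic K_{m,n}. -/
/-!
Some colour `i` has at least `N·M/s` edges, so the `i`-degrees of the `N` right-hand vertices
average at least `p = ⌊M/s⌋`. By convexity of `x ↦ C(x, m)`, the right-hand vertices together see
at least `N·C(p, m)` monochromatic `m`-stars, and the choice of `N` makes this exceed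
`(n - 1)·C(M, m)`. Since there are only `C(M, m)` left-hand `m`-sets, one of them is the leaf set
of `n` stars, i.e. spans a monochromatic `K_{m,n}` (Kővári–Sós–Turán).
-/

open Finset Fintype

-- The tangent line of the convex function `x ↦ C(x, k + 1)` at `p`, with both sides moved so that
-- no subtraction occurs.
lemma choose_succ_add_mul_choose_le (k p x : ℕ) :
    p.choose (k + 1) + x * p.choose k ≤ x.choose (k + 1) + p * p.choose k := by
  rcases le_total p x with hpx | hxp
  · induction x, hpx using Nat.le_induction with
    | base => omega
    | succ x hpx ih =>
      have hmono : p.choose k ≤ x.choose k := Nat.choose_le_choose k hpx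
      rw [Nat.choose_succ_succ', add_one_mul]
      omega
  · induction p, hxp using Nat.le_induction with
    | base => omega
    | succ p hxp ih =>
      have hmono : p.choose k ≤ (p + 1).choose k := Nat.choose_le_choose k p.le_succ
      rw [Nat.choose_succ_succ']
      zify at ih hmono ⊢
      nlinarith [mul_le_mul_of_nonneg_left hmono (by omega : (0 : ℤ) ≤ p + 1 - x)]

lemma card_mul_choose_le_sum_choose {ι : Type*} (k p : ℕ) (s : Finset ι) (f : ι → ℕ)
    (h : #s * p ≤ ∑ i ∈ s, f i) :
    #s * p.choose k ≤ ∑ i ∈ s, (f i).choose k := by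
  cases k with
  | zero => simp
  | succ k =>
    have tangent := sum_le_sum fun i (_ : i ∈ s) => choose_succ_add_mul_choose_le k p (f i)
    rw [sum_add_distrib, sum_add_distrib, sum_const, sum_const, ← sum_mul, smul_eq_mul,
      smul_eq_mul] at tangent
    have := Nat.mul_le_mul_right (p.choose k) h
    rw [mul_assoc] at this
    omega

section Counting

variable {α β : Type*} [Fintype α] [DecidableEq α] [Fintype β]

lemma sum_choose_card_eq_sum_card_filter_subset (A : β → Finset α) (k : ℕ) :
    ∑ b, (#(A b)).choose k = ∑ S ∈ powersetCard k univ, #{b | S ⊆ A b} := by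
  have hstars (b : β) : {S ∈ powersetCard k (univ : Finset α) | S ⊆ A b} = powersetCard k (A b) := by
    ext S
    simp [mem_powersetCard, and_comm]
  simp_rw [← card_powersetCard, ← hstars, card_filter]
  exact Finset.sum_comm

theorem exists_card_eq_lt_card_filter_subset (A : β → Finset α) {k p n : ℕ}
    (hdeg : card β * p ≤ ∑ b, #(A b))
    (hlarge : n * (card α).choose k < card β * p.choose k) :
    ∃ S : Finset α, #S = k ∧ n < #{b | S ⊆ A b} := by
  have hsum : ∑ _S ∈ powersetCard k (univ : Finset α), n
      < ∑ S ∈ powersetCard k univ, #{b | S ⊆ A b} := by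
    rw [sum_const, card_powersetCard, card_univ, smul_eq_mul, mul_comm,
      ← sum_choose_card_eq_sum_card_filter_subset]
    exact hlarge.trans_le (card_mul_choose_le_sum_choose k p univ _ hdeg)
  obtain ⟨S, hS, hlt⟩ := exists_lt_of_sum_lt hsum
  exact ⟨S, (mem_powersetCard.1 hS).2, hlt⟩

end Counting

lemma exists_le_sum_card_filter_eq {α β γ : Type*} [Fintype α] [Fintype β] [Fintype γ]
    [DecidableEq γ] [Nonempty γ] (c : α → β → γ) {q : ℕ}
    (hq : card γ * q ≤ card α * card β) :
    ∃ i, q ≤ ∑ b, #{a | c a b = i} := by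
  obtain ⟨i, hi⟩ := exists_le_card_fiber_of_mul_le_card (fun e : α × β => c e.1 e.2)
    (by rwa [card_prod])
  refine ⟨i, hi.trans_eq ?_⟩
  simp_rw [card_filter]
  exact sum_prod_type_right _

lemma Nat.sub_one_mul_lt_mul_div_mul {a b n : ℕ} (hb : 0 < b) (hba : b ≤ a) (hn : 1 ≤ n) :
    (n - 1) * a < a * n / b * b := by
  obtain ⟨n, rfl⟩ := Nat.exists_eq_add_of_le' hn
  have hdiv := Nat.lt_div_mul_add (a := a * (n + 1)) hb
  rw [Nat.add_sub_cancel, mul_comm n]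
  rw [mul_add_one] at hdiv ⊢
  omega

theorem complete_bipartite_arrows_general (m n s M : ℕ) (hn : 1 ≤ n) (hs : 1 ≤ s)
    (hM : s * m ≤ M)
    (N : ℕ) (hN : N = M.choose m * n / (M / s).choose m)
    (c : Fin M → Fin N → Fin s) :
    ∃ (i : Fin s) (S : Finset (Fin M)) (T : Finset (Fin N)),
      S.card = m ∧ T.card = n ∧ ∀ a ∈ S, ∀ b ∈ T, c a b = i := by
  have : Nonempty (Fin s) := ⟨⟨0, hs⟩⟩
  have hmp : m ≤ M / s := (Nat.le_div_iff_mul_le hs).2 (by rwa [mul_comm])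
  obtain ⟨i, hi⟩ := exists_le_sum_card_filter_eq c (q := N * (M / s)) <| by
    simp only [Fintype.card_fin]
    rw [mul_left_comm, mul_comm M]
    exact Nat.mul_le_mul_left N (Nat.mul_div_le M s)
  have hlarge : (n - 1) * M.choose m < N * (M / s).choose m := hN ▸
    Nat.sub_one_mul_lt_mul_div_mul (Nat.choose_pos hmp)
      (Nat.choose_le_choose m (Nat.div_le_self M s)) hn
  obtain ⟨S, hS, hT⟩ := exists_card_eq_lt_card_filter_subset (fun b => {a | c a b = i})
    (by simpa using hi) (by simpa using hlarge)
  obtain ⟨T, hTsub, hTcard⟩ := exists_subset_card_eq (Nat.le_of_pred_lt hT)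
  refine ⟨i, S, T, hS, hTcard, fun a ha b hb => ?_⟩
  simpa using (mem_filter.1 (hTsub hb)).2 ha

/-- Let `m, n, s` be positive integers with `m ≥ 2`, `M ≥ sm` and `s ∣ M`, and set
`N = ⌊C(M,m)·n / C(M/s,m)⌋`. Then every `s`-edge-coloring of `K_{M,N}` contains a
monochromatic `K_{m,n}`. -/
theorem complete_bipartite_arrows (m n s M : ℕ) (hm : 2 ≤ m) (hn : 1 ≤ n) (hs : 1 ≤ s)
    (hdvd : s ∣ M) (hM : s * m ≤ M)
    (N : ℕ) (hN : N = M.choose m * n / (M / s).choose m)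
    (c : Fin M → Fin N → Fin s) :
    ∃ (i : Fin s) (S : Finset (Fin M)) (T : Finset (Fin N)),
      S.card = m ∧ T.card = n ∧ ∀ a ∈ S, ∀ b ∈ T, c a b = i :=
  complete_bipartite_arrows_general m n s M hn hs hM N hN c
end

section
/- For integers s ≥ 1 and 2 ≤ m ≤ s+1, with M = (s+1)m, the ratio C(M,m)/C(M/s,m) is at most s^m · e^{s² - 1}, where C denotes binomial coefficients and M/s need not be an integer (interpret C(M/s,m) as the falling-factorial binomial). -/
lemma descPoch_eval_prod (x : ℝ) (m : ℕ) :
    (descPochhammer ℝ m).eval x = ∏ i ∈ Finset.range m, (x - i) := by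
  induction m with
  | zero => simp
  | succ n ih => rw [descPochhammer_succ_eval, Finset.prod_range_succ, ih]

/-- For `s ≥ 1`, `2 ≤ m ≤ s+1` and `M = (s+1)m`, the ratio `C(M,m)/C(M/s,m)` is at most
`s^m · e^(s²-1)`, where `C(M/s, m)` is the generalized (falling-factorial) binomial. -/
theorem ratio_bound_small_m (s m M : ℕ) (hs : 1 ≤ s) (hm : 2 ≤ m) (hms : m ≤ s + 1)
    (hM : M = (s + 1) * m) :
    (M.choose m : ℝ) / ((descPochhammer ℝ m).eval ((M : ℝ) / s) / m.factorial) ≤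
      (s : ℝ) ^ m * Real.exp ((s : ℝ) ^ 2 - 1) := by
  have hs1 : (1:ℝ) ≤ (s:ℝ) := by exact_mod_cast hs
  have hm2 : (2:ℝ) ≤ (m:ℝ) := by exact_mod_cast hm
  have hms' : (m:ℝ) ≤ (s:ℝ) + 1 := by exact_mod_cast hms
  have hspos : (0:ℝ) < s := by linarith
  have hMr : (M:ℝ) = ((s:ℝ)+1) * m := by rw [hM]; push_cast; ring
  set c : ℝ := ((s:ℝ)-1)*((m:ℝ)-1)/((m:ℝ)+(s:ℝ)) with hc
  have hmspos : (0:ℝ) < (m:ℝ)+(s:ℝ) := by linarith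
  have hcnn : 0 ≤ c := by
    apply div_nonneg _ (le_of_lt hmspos)
    nlinarith
  have hirange : ∀ i ∈ Finset.range m, (i:ℝ) ≤ (m:ℝ) - 1 := by
    intro i hi
    have := Finset.mem_range.mp hi
    have : (i:ℝ) + 1 ≤ m := by exact_mod_cast this
    linarith
  have hdenpos : ∀ i ∈ Finset.range m, 0 < (M:ℝ)/s - i := by
    intro i hi
    have hi' := hirange i hi
    rw [div_sub' (ne_of_gt hspos)]
    apply div_pos _ hspos
    nlinarith
  -- per-factor bound
  have hfac : ∀ i ∈ Finset.range m,
      ((M:ℝ) - i) / ((M:ℝ)/s - i) ≤ (s:ℝ) * Real.exp c := by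
    intro i hi
    have hi' := hirange i hi
    have hden := hdenpos i hi
    have hden2 : 0 < (M:ℝ) - s*i := by nlinarith
    have heq : ((M:ℝ) - i) / ((M:ℝ)/s - i) = (s:ℝ)*((M:ℝ) - i) / ((M:ℝ) - s*i) := by
      rw [div_sub' (ne_of_gt hspos), div_div_eq_mul_div]
      ring
    rw [heq]
    have step1 : (s:ℝ)*((M:ℝ) - i) / ((M:ℝ) - s*i) ≤ (s:ℝ)*((s:ℝ)*m+1)/((m:ℝ)+(s:ℝ)) := by
      rw [div_le_div_iff₀ hden2 hmspos]
      have key : (s:ℝ)*((s:ℝ)*m+1)*((M:ℝ)-s*i) - (s:ℝ)*((M:ℝ)-i)*((m:ℝ)+s)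
          = (s:ℝ)*m*((s:ℝ)^2-1)*((m:ℝ)-1-i) := by rw [hMr]; ring
      have hnn : 0 ≤ (s:ℝ)*m*((s:ℝ)^2-1)*((m:ℝ)-1-i) := by
        apply mul_nonneg _ (by linarith)
        apply mul_nonneg (by positivity)
        nlinarith
      linarith
    have heq2 : (s:ℝ)*((s:ℝ)*m+1)/((m:ℝ)+(s:ℝ)) = (s:ℝ) * (1 + c) := by
      rw [hc]
      field_simp
      ring

    have step2 : (s:ℝ) * (1 + c) ≤ (s:ℝ) * Real.exp c := by
      have := Real.add_one_le_exp c
      nlinarith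
    linarith [heq2 ▸ step1]
  have hpos : ∀ i ∈ Finset.range m, 0 ≤ ((M:ℝ) - i) / ((M:ℝ)/s - i) := by
    intro i hi
    have hi' := hirange i hi
    have hnum : 0 ≤ (M:ℝ) - i := by nlinarith
    exact div_nonneg hnum (le_of_lt (hdenpos i hi))
  -- rewrite choose and descPochhammer
  have hmM : m ≤ M := by
    rw [hM]; nlinarith
  have hchoose : (M.choose m : ℝ) = (∏ i ∈ Finset.range m, ((M:ℝ) - i)) / m.factorial := by
    have h1 : M.descFactorial m = (M.choose m) * m.factorial := by
      rw [Nat.descFactorial_eq_factorial_mul_choose]; ring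
    have h2 : ((M.descFactorial m : ℕ) : ℝ) = ∏ i ∈ Finset.range m, ((M:ℝ) - i) := by
      rw [Nat.descFactorial_eq_prod_range, Nat.cast_prod]
      apply Finset.prod_congr rfl
      intro i hi
      have : i ≤ M := le_trans (le_of_lt (Finset.mem_range.mp hi)) hmM
      push_cast [Nat.cast_sub this]
      ring
    rw [eq_div_iff (by positivity : ((m.factorial : ℝ)) ≠ 0), ← h2, h1]
    push_cast
    ring
  have hdesc : (descPochhammer ℝ m).eval ((M:ℝ)/s) = ∏ i ∈ Finset.range m, ((M:ℝ)/s - i) :=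
    descPoch_eval_prod _ _
  have hdpos : 0 < ∏ i ∈ Finset.range m, ((M:ℝ)/s - i) := Finset.prod_pos hdenpos
  have hfpos : (0:ℝ) < m.factorial := by exact_mod_cast m.factorial_pos
  rw [hchoose, hdesc]
  have hre : (∏ i ∈ Finset.range m, ((M:ℝ) - i)) / m.factorial /
      ((∏ i ∈ Finset.range m, ((M:ℝ)/s - i)) / m.factorial)
      = ∏ i ∈ Finset.range m, (((M:ℝ) - i) / ((M:ℝ)/s - i)) := by
    rw [Finset.prod_div_distrib, div_div_eq_mul_div, div_mul_cancel₀ _ (ne_of_gt hfpos)]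
  rw [hre]
  calc ∏ i ∈ Finset.range m, (((M:ℝ) - i) / ((M:ℝ)/s - i))
      ≤ ∏ _i ∈ Finset.range m, ((s:ℝ) * Real.exp c) :=
        Finset.prod_le_prod hpos hfac
    _ = ((s:ℝ) * Real.exp c)^m := by rw [Finset.prod_const, Finset.card_range]
    _ = (s:ℝ)^m * Real.exp (c * m) := by
        rw [mul_pow, ← Real.exp_nat_mul]
        ring_nf
    _ ≤ (s:ℝ)^m * Real.exp ((s:ℝ)^2 - 1) := by
        apply mul_le_mul_of_nonneg_left _ (by positivity)
        apply Real.exp_le_exp.mpr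
        rw [hc, div_mul_eq_mul_div, div_le_iff₀ hmspos]
        nlinarith [mul_nonneg (mul_nonneg (by linarith : (0:ℝ) ≤ (s:ℝ)-1) (by linarith : (0:ℝ) ≤ (m:ℝ))) (by linarith : (0:ℝ) ≤ (s:ℝ)+1-m),
          mul_nonneg (by linarith : (0:ℝ) ≤ (s:ℝ)-1) (by positivity : (0:ℝ) ≤ (s:ℝ)^2+m+s)]
end

section
/- Fix positive integers m, s with s ≥ 2. If s·C(N, m+n)·C(m+n, m) < s^{mn}, then there exists an s-edge-coloring of the complete graph K_N with no monochromatic copy of K_{m,n}; in particular K_N does not arrow K_{m,n} in s colors. -/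
open Finset

private lemma card_edgeImage {N : ℕ} {S T : Finset (Fin N)} (hd : Disjoint S T) :
    ((S ×ˢ T).image fun p => s(p.1, p.2)).card = S.card * T.card := by
  rw [Finset.card_image_of_injOn, Finset.card_product]
  intro p hp q hq h
  simp only [Finset.mem_coe, Finset.mem_product] at hp hq
  rw [Sym2.eq_iff] at h
  rcases h with ⟨h1, h2⟩ | ⟨h1, h2⟩
  · exact Prod.ext h1 h2
  · exact absurd hq.2 (by rw [← h1]; exact Finset.disjoint_left.mp hd hp.1)

/-- First-moment bound: for `s ≥ 2`, if `s·C(N,m+n)·C(m+n,m) < s^(mn)` then there is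
an `s`-edge-coloring of `K_N` with no monochromatic copy of `K_{m,n}`; in particular
`K_N` does not arrow `K_{m,n}` in `s` colors. -/
theorem exists_coloring_no_mono_completeBipartite (m n s N : ℕ)
    (hm : 1 ≤ m) (hn : 1 ≤ n) (hs : 2 ≤ s)
    (hcount : s * N.choose (m + n) * (m + n).choose m < s ^ (m * n)) :
    ∃ c : Sym2 (Fin N) → Fin s,
      ¬ ∃ (i : Fin s) (S T : Finset (Fin N)), Disjoint S T ∧
          S.card = m ∧ T.card = n ∧ ∀ a ∈ S, ∀ b ∈ T, c s(a, b) = i := by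
  classical
  by_contra hcon
  push_neg at hcon
  choose wi wS wT hdisj hScard hTcard hmono using hcon
  set E := Fintype.card (Sym2 (Fin N)) with hE
  set W : Finset (Fin s × Finset (Fin N) × Finset (Fin N)) :=
    Finset.univ.filter
      (fun w => Disjoint w.2.1 w.2.2 ∧ w.2.1.card = m ∧ w.2.2.card = n) with hWdef
  -- bound on number of witnesses
  have hW : W.card ≤ s * (N.choose (m + n) * (m + n).choose m) := by
    have hinj := Finset.card_le_card_of_injOn
      (f := fun w : Fin s × Finset (Fin N) × Finset (Fin N) =>
        (w.1, (⟨w.2.1 ∪ w.2.2, w.2.1⟩ : Σ _ : Finset (Fin N), Finset (Fin N))))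
      (s := W)
      (t := Finset.univ ×ˢ
        (Finset.univ.powersetCard (m + n)).sigma (fun U => U.powersetCard m))
      ?_ ?_
    · refine hinj.trans_eq ?_
      rw [Finset.card_product, Finset.card_univ, Fintype.card_fin, Finset.card_sigma]
      congr 1
      rw [Finset.sum_congr rfl (fun U hU => ?_), Finset.sum_const, smul_eq_mul,
        Finset.card_powersetCard, Finset.card_univ, Fintype.card_fin]
      rw [Finset.mem_powersetCard] at hU
      rw [Finset.card_powersetCard, hU.2]
    · intro w hw
      rw [hWdef, Finset.mem_coe, Finset.mem_filter] at hw
      obtain ⟨-, hd, h1, h2⟩ := hw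
      simp only [Finset.mem_coe, Finset.mem_product, Finset.mem_univ, true_and, Finset.mem_sigma,
        Finset.mem_powersetCard]
      exact ⟨⟨Finset.subset_univ _, by rw [Finset.card_union_of_disjoint hd, h1, h2]⟩,
        Finset.subset_union_left, h1⟩
    · intro w hw w' hw' h
      simp only [Finset.mem_coe, hWdef, Finset.mem_filter] at hw hw'
      simp only [Prod.mk.injEq, Sigma.mk.inj_iff, heq_eq_eq] at h
      obtain ⟨h1, h2, h3⟩ := h
      have hT : w.2.2 = w'.2.2 := by
        have := Finset.union_sdiff_cancel_left hw.2.1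
        have := Finset.union_sdiff_cancel_left hw'.2.1
        rw [← Finset.union_sdiff_cancel_left hw.2.1,
          ← Finset.union_sdiff_cancel_left hw'.2.1, h2, h3]
      exact Prod.ext h1 (Prod.ext h3 hT)
  -- fiber bound
  have hfiber : ∀ w ∈ W,
      (Finset.univ.filter
        fun c : Sym2 (Fin N) → Fin s => (wi c, wS c, wT c) = w).card ≤ s ^ (E - m * n) := by
    rintro ⟨i, S, T⟩ hw
    rw [hWdef, Finset.mem_filter] at hw
    obtain ⟨-, hd, hSm, hTn⟩ := hw
    set B : Finset (Sym2 (Fin N)) := (S ×ˢ T).image fun p => s(p.1, p.2) with hBdef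
    have hBcard : B.card = m * n := by rw [hBdef, card_edgeImage hd, hSm, hTn]
    have := Finset.card_le_card_of_injOn
      (f := fun (c : Sym2 (Fin N) → Fin s) (e : {x // x ∈ Bᶜ}) => c e.1)
      (s := Finset.univ.filter
        fun c : Sym2 (Fin N) → Fin s => (wi c, wS c, wT c) = (i, S, T))
      (t := (Finset.univ : Finset ({x // x ∈ Bᶜ} → Fin s))) (fun _ _ => Finset.mem_univ _) ?_
    · refine this.trans_eq ?_
      rw [Finset.card_univ, Fintype.card_fun, Fintype.card_fin, Fintype.card_coe,
        Finset.card_compl, hBcard]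
    · intro c hc c' hc' hcc
      simp only [Finset.mem_coe, Finset.mem_filter, Prod.mk.injEq] at hc hc'
      obtain ⟨-, hwi, hwS, hwT⟩ := hc
      obtain ⟨-, hwi', hwS', hwT'⟩ := hc'
      funext e
      by_cases he : e ∈ B
      · rw [hBdef, Finset.mem_image] at he
        obtain ⟨⟨a, b⟩, hab, rfl⟩ := he
        rw [Finset.mem_product] at hab
        have h1 := hmono c a (by rw [hwS]; exact hab.1) b (by rw [hwT]; exact hab.2)
        have h2 := hmono c' a (by rw [hwS']; exact hab.1) b (by rw [hwT']; exact hab.2)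
        rw [h1, h2, hwi, hwi']
      · exact congrFun hcc ⟨e, Finset.mem_compl.mpr he⟩
  -- total count
  have hmapsto : ∀ c : Sym2 (Fin N) → Fin s, (wi c, wS c, wT c) ∈ W := by
    intro c
    rw [hWdef, Finset.mem_filter]
    exact ⟨Finset.mem_univ _, hdisj c, hScard c, hTcard c⟩
  have htotal : (Finset.univ : Finset (Sym2 (Fin N) → Fin s)).card
      ≤ s ^ (E - m * n) * W.card :=
    Finset.card_le_mul_card_image_of_maps_to (fun c _ => hmapsto c) _ hfiber
  have hmnE : m * n ≤ E := by
    have c0 : Sym2 (Fin N) → Fin s := fun _ => ⟨0, by omega⟩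
    have hB := card_edgeImage (hdisj c0)
    rw [hScard c0, hTcard c0] at hB
    calc m * n = _ := hB.symm
      _ ≤ E := Finset.card_le_univ _
  have hpos : 0 < s ^ (E - m * n) := Nat.pow_pos (by omega)
  have hfinal : s ^ E < s ^ E := by
    calc s ^ E = (Finset.univ : Finset (Sym2 (Fin N) → Fin s)).card := by
          rw [Finset.card_univ, Fintype.card_fun, Fintype.card_fin]
      _ ≤ s ^ (E - m * n) * W.card := htotal
      _ ≤ s ^ (E - m * n) * (s * (N.choose (m + n) * (m + n).choose m)) :=
          Nat.mul_le_mul_left _ hW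
      _ < s ^ (E - m * n) * s ^ (m * n) := by
          exact mul_lt_mul_of_pos_left (by rw [← mul_assoc]; exact hcount) hpos
      _ = s ^ E := by rw [← pow_add, Nat.sub_add_cancel hmnE]
  exact absurd hfinal (lt_irrefl _)
end
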